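/- Let C and D be stable configuration structures without equidepth auto-concurrency, and let R be a reverse bisimulation between them. If R(X, Y), X —a,k→ X', Y —a,k'→ Y', and R(X', Y'), then k = k'. -/

import Mathlib

/-!
Related configurations carry the same multiset of (label, depth) pairs; the theorem follows by
comparing these multisets before and after the two matched transitions.

The multiset claim is proved by induction on the size of `X`. Undoing a maximal event `e` of `X`
is matched, by the reverse bisimulation, by undoing a maximal event `f` of `Y` with the same
label, and by induction the remainders agree. If the multisets of `X` and `Y` still differed,
the depths of `e` and `f` would differ, and counting shows that all maximal events of `X` would
share one label and one depth. Maximal events are pairwise concurrent, so without equidepth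
auto-concurrency `X` has a single maximal event, which lies above all others; likewise in `Y`.
But the depth of such a top event is one more than the largest depth below it, and that is the
same for the two matched remainders.
-/

universe u v

/-- A configuration structure over event type `E` and label alphabet `L`:
a family of finite sets of events (configurations) with a labelling. -/
structure CS (E : Type u) (L : Type v) where
  C : Set (Set E)
  finite : ∀ X ∈ C, X.Finite
  label : E → L

namespace CS

variable {E E₁ E₂ : Type u} {L : Type v}

/-- Stability: rooted, connected, closed under bounded unions and intersections. -/
def IsStable (𝒞 : CS E L) : Prop :=
  ∅ ∈ 𝒞.C ∧
  (∀ X ∈ 𝒞.C, X ≠ ∅ → ∃ e ∈ X, X \ {e} ∈ 𝒞.C) ∧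
  (∀ X ∈ 𝒞.C, ∀ Y ∈ 𝒞.C, ∀ Z ∈ 𝒞.C, X ∪ Y ⊆ Z → X ∪ Y ∈ 𝒞.C) ∧
  (∀ X ∈ 𝒞.C, ∀ Y ∈ 𝒞.C, ∀ Z ∈ 𝒞.C, X ∪ Y ⊆ Z → X ∩ Y ∈ 𝒞.C)

/-- Causality: `d ≤_X e` iff every sub-configuration of `X` containing `e` contains `d`. -/
def le (𝒞 : CS E L) (X : Set E) (d e : E) : Prop :=
  ∀ Y ∈ 𝒞.C, Y ⊆ X → e ∈ Y → d ∈ Y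

/-- Strict causality `d <_X e`. -/
def lt (𝒞 : CS E L) (X : Set E) (d e : E) : Prop :=
  le 𝒞 X d e ∧ d ≠ e

/-- Concurrency within a configuration. -/
def co (𝒞 : CS E L) (X : Set E) (d e : E) : Prop :=
  ¬ lt 𝒞 X d e ∧ ¬ lt 𝒞 X e d

/-- The set of minimal events of a configuration. -/
def minE (𝒞 : CS E L) (X : Set E) : Set E :=
  {e | e ∈ X ∧ ∀ d ∈ X, ¬ lt 𝒞 X d e}

/-- Depth of an event in a configuration: the length of the longest
causal chain (w.r.t. `<_X`) in `X` up to and including `e`. -/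
noncomputable def depth (𝒞 : CS E L) (X : Set E) (e : E) : ℕ :=
  sSup {n | ∃ l : List E, l.length = n ∧ l.Chain' (lt 𝒞 X) ∧
    (∀ x ∈ l, x ∈ X) ∧ l.getLast? = some e}

/-- Multiset of labels of a (finite) set of events. -/
noncomputable def labelMS (𝒞 : CS E L) (S : Set E) : Multiset L := by
  classical exact if h : S.Finite then h.toFinset.val.map 𝒞.label else 0

/-- Single-event forward transition `X —a→ X'`. -/
def FTrans (𝒞 : CS E L) (a : L) (X X' : Set E) : Prop :=
  X ∈ 𝒞.C ∧ X' ∈ 𝒞.C ∧ X ⊆ X' ∧ ∃ e, X' \ X = {e} ∧ 𝒞.label e = a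

/-- Single-event reverse transition `X ⇝a X'`. -/
def RTrans (𝒞 : CS E L) (a : L) (X X' : Set E) : Prop :=
  FTrans 𝒞 a X' X

/-- Step transition `X —A→ X'`: the added events are pairwise concurrent
in `X'` and carry the label multiset `A`. -/
def Step (𝒞 : CS E L) (A : Multiset L) (X X' : Set E) : Prop :=
  X ∈ 𝒞.C ∧ X' ∈ 𝒞.C ∧ X ⊆ X' ∧ ∃ F : Finset E, ↑F = X' \ X ∧
    (∀ d ∈ F, ∀ e ∈ F, co 𝒞 X' d e) ∧ F.val.map 𝒞.label = A

/-- Reverse step transition `X ⇝A X'`. -/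
def RStep (𝒞 : CS E L) (A : Multiset L) (X X' : Set E) : Prop :=
  Step 𝒞 A X' X

/-- Equidepth step: all added events have the same depth in `X'`. -/
def EqStep (𝒞 : CS E L) (A : Multiset L) (X X' : Set E) : Prop :=
  Step 𝒞 A X X' ∧ ∀ d ∈ X' \ X, ∀ e ∈ X' \ X, depth 𝒞 X' d = depth 𝒞 X' e

/-- Reverse equidepth step `X ⇝A= X'`. -/
def REqStep (𝒞 : CS E L) (A : Multiset L) (X X' : Set E) : Prop :=
  EqStep 𝒞 A X' X

/-- Single-event forward transition with depth: the new event has label `a`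
and depth `k` in `X'`. -/
def FTransD (𝒞 : CS E L) (a : L) (k : ℕ) (X X' : Set E) : Prop :=
  X ∈ 𝒞.C ∧ X' ∈ 𝒞.C ∧ X ⊆ X' ∧
    ∃ e, X' \ X = {e} ∧ 𝒞.label e = a ∧ depth 𝒞 X' e = k

/-- Single-event reverse transition with depth. -/
def RTransD (𝒞 : CS E L) (a : L) (k : ℕ) (X X' : Set E) : Prop :=
  FTransD 𝒞 a k X' X

/-- A multiset of labels is homogeneous if all its elements are equal. -/
def Hom (A : Multiset L) : Prop := ∀ a ∈ A, ∀ b ∈ A, a = b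

/-- `R` is a relation between configurations of `𝒞` and `𝒟`, containing `(∅, ∅)`. -/
def Dom (𝒞 : CS E₁ L) (𝒟 : CS E₂ L) (R : Set E₁ → Set E₂ → Prop) : Prop :=
  R ∅ ∅ ∧ ∀ X Y, R X Y → X ∈ 𝒞.C ∧ Y ∈ 𝒟.C

/-- Interleaving bisimulation. -/
def IsIB (𝒞 : CS E₁ L) (𝒟 : CS E₂ L) (R : Set E₁ → Set E₂ → Prop) : Prop :=
  Dom 𝒞 𝒟 R ∧ ∀ X Y, R X Y →
    (∀ a X', FTrans 𝒞 a X X' → ∃ Y', FTrans 𝒟 a Y Y' ∧ R X' Y') ∧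
    (∀ a Y', FTrans 𝒟 a Y Y' → ∃ X', FTrans 𝒞 a X X' ∧ R X' Y')

/-- Reverse bisimulation: an IB also matching reverse single-event transitions. -/
def IsRB (𝒞 : CS E₁ L) (𝒟 : CS E₂ L) (R : Set E₁ → Set E₂ → Prop) : Prop :=
  IsIB 𝒞 𝒟 R ∧ ∀ X Y, R X Y →
    (∀ a X', RTrans 𝒞 a X X' → ∃ Y', RTrans 𝒟 a Y Y' ∧ R X' Y') ∧
    (∀ a Y', RTrans 𝒟 a Y Y' → ∃ X', RTrans 𝒞 a X X' ∧ R X' Y')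

/-- Step bisimulation. -/
def IsSB (𝒞 : CS E₁ L) (𝒟 : CS E₂ L) (R : Set E₁ → Set E₂ → Prop) : Prop :=
  Dom 𝒞 𝒟 R ∧ ∀ X Y, R X Y →
    (∀ A X', Step 𝒞 A X X' → ∃ Y', Step 𝒟 A Y Y' ∧ R X' Y') ∧
    (∀ A Y', Step 𝒟 A Y Y' → ∃ X', Step 𝒞 A X X' ∧ R X' Y')

/-- Reverse step bisimulation: an SB also matching reverse steps. -/
def IsRSB (𝒞 : CS E₁ L) (𝒟 : CS E₂ L) (R : Set E₁ → Set E₂ → Prop) : Prop :=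
  IsSB 𝒞 𝒟 R ∧ ∀ X Y, R X Y →
    (∀ A X', RStep 𝒞 A X X' → ∃ Y', RStep 𝒟 A Y Y' ∧ R X' Y') ∧
    (∀ A Y', RStep 𝒟 A Y Y' → ∃ X', RStep 𝒞 A X X' ∧ R X' Y')

/-- Reverse homogeneous step bisimulation: matches forward single-event
transitions and reverse homogeneous steps. -/
def IsRHSB (𝒞 : CS E₁ L) (𝒟 : CS E₂ L) (R : Set E₁ → Set E₂ → Prop) : Prop :=
  Dom 𝒞 𝒟 R ∧ ∀ X Y, R X Y →
    (∀ a X', FTrans 𝒞 a X X' → ∃ Y', FTrans 𝒟 a Y Y' ∧ R X' Y') ∧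
    (∀ a Y', FTrans 𝒟 a Y Y' → ∃ X', FTrans 𝒞 a X X' ∧ R X' Y') ∧
    (∀ A X', Hom A → RStep 𝒞 A X X' → ∃ Y', RStep 𝒟 A Y Y' ∧ R X' Y') ∧
    (∀ A Y', Hom A → RStep 𝒟 A Y Y' → ∃ X', RStep 𝒞 A X X' ∧ R X' Y')

/-- Reverse homogeneous equidepth step bisimulation. -/
def IsRHESB (𝒞 : CS E₁ L) (𝒟 : CS E₂ L) (R : Set E₁ → Set E₂ → Prop) : Prop :=
  Dom 𝒞 𝒟 R ∧ ∀ X Y, R X Y →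
    (∀ a X', FTrans 𝒞 a X X' → ∃ Y', FTrans 𝒟 a Y Y' ∧ R X' Y') ∧
    (∀ a Y', FTrans 𝒟 a Y Y' → ∃ X', FTrans 𝒞 a X X' ∧ R X' Y') ∧
    (∀ A X', Hom A → REqStep 𝒞 A X X' → ∃ Y', REqStep 𝒟 A Y Y' ∧ R X' Y') ∧
    (∀ A Y', Hom A → REqStep 𝒟 A Y Y' → ∃ X', REqStep 𝒞 A X X' ∧ R X' Y')

/-- Depth-respecting bisimulation. -/
def IsDB (𝒞 : CS E₁ L) (𝒟 : CS E₂ L) (R : Set E₁ → Set E₂ → Prop) : Prop :=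
  Dom 𝒞 𝒟 R ∧ ∀ X Y, R X Y →
    (∀ a k X', FTransD 𝒞 a k X X' → ∃ Y', FTransD 𝒟 a k Y Y' ∧ R X' Y') ∧
    (∀ a k Y', FTransD 𝒟 a k Y Y' → ∃ X', FTransD 𝒞 a k X X' ∧ R X' Y')

/-- Reverse depth-respecting bisimulation. -/
def IsRDB (𝒞 : CS E₁ L) (𝒟 : CS E₂ L) (R : Set E₁ → Set E₂ → Prop) : Prop :=
  IsDB 𝒞 𝒟 R ∧ ∀ X Y, R X Y →
    (∀ a k X', RTransD 𝒞 a k X X' → ∃ Y', RTransD 𝒟 a k Y Y' ∧ R X' Y') ∧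
    (∀ a k Y', RTransD 𝒟 a k Y Y' → ∃ X', RTransD 𝒞 a k X X' ∧ R X' Y')

/-- The lifting of a configuration structure w.r.t. a configuration `M`. -/
def lift (𝒞 : CS E L) (M : Set E) : CS E L where
  C := {Z | ∃ X, X ∈ 𝒞.C ∧ M ⊆ X ∧ minE 𝒞 X = minE 𝒞 M ∧ Z = X \ M}
  finite := by
    rintro Z ⟨X, hX, -, -, rfl⟩
    exact (𝒞.finite X hX).subset Set.diff_subset
  label := 𝒞.label

/-- Events of `X` of depth at most `n`. -/
def levelLe (𝒞 : CS E L) (X : Set E) (n : ℕ) : Set E :=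
  {e | e ∈ X ∧ depth 𝒞 X e ≤ n}

/-- Events of `X` of depth exactly `n`. -/
def levelEq (𝒞 : CS E L) (X : Set E) (n : ℕ) : Set E :=
  {e | e ∈ X ∧ depth 𝒞 X e = n}

/-- No equidepth auto-concurrency: distinct concurrent events never share
both label and depth. -/
def NoEqAC (𝒞 : CS E L) : Prop :=
  ∀ X ∈ 𝒞.C, ∀ d ∈ X, ∀ e ∈ X, co 𝒞 X d e → 𝒞.label d = 𝒞.label e →
    depth 𝒞 X d = depth 𝒞 X e → d = e

/-- `f` (a set of pairs) is a label- and order-preserving isomorphism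
between configurations `X` and `Y`. -/
def IsIso (𝒞 : CS E₁ L) (𝒟 : CS E₂ L) (X : Set E₁) (Y : Set E₂)
    (f : Set (E₁ × E₂)) : Prop :=
  (∀ p ∈ f, p.1 ∈ X ∧ p.2 ∈ Y) ∧
  (∀ d ∈ X, ∃! e, (d, e) ∈ f) ∧
  (∀ e ∈ Y, ∃! d, (d, e) ∈ f) ∧
  (∀ p ∈ f, 𝒞.label p.1 = 𝒟.label p.2) ∧
  (∀ p ∈ f, ∀ q ∈ f, (lt 𝒞 X p.1 q.1 ↔ lt 𝒟 Y p.2 q.2))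

/-- Hereditary history-preserving bisimulation. -/
def IsHH (𝒞 : CS E₁ L) (𝒟 : CS E₂ L)
    (R : Set (Set E₁ × Set E₂ × Set (E₁ × E₂))) : Prop :=
  (∅, ∅, ∅) ∈ R ∧
  ∀ X Y f, (X, Y, f) ∈ R →
    X ∈ 𝒞.C ∧ Y ∈ 𝒟.C ∧ IsIso 𝒞 𝒟 X Y f ∧
    (∀ a X', FTrans 𝒞 a X X' → ∃ Y' f', FTrans 𝒟 a Y Y' ∧
      (X', Y', f') ∈ R ∧ {p ∈ f' | p.1 ∈ X} = f) ∧
    (∀ a Y', FTrans 𝒟 a Y Y' → ∃ X' f', FTrans 𝒞 a X X' ∧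
      (X', Y', f') ∈ R ∧ {p ∈ f' | p.1 ∈ X} = f) ∧
    (∀ a X', RTrans 𝒞 a X X' → ∃ Y' f', RTrans 𝒟 a Y Y' ∧
      (X', Y', f') ∈ R ∧ {p ∈ f | p.1 ∈ X'} = f')

end CS

open CS

theorem Multiset.eq_of_cons_eq_cons_of_ne {α : Type*} {p p' q q' : α} {s t : Multiset α}
    (hp : p ::ₘ s = p' ::ₘ t) (hq : q ::ₘ s = q' ::ₘ t) (hpq : p ≠ q) : p = p' := by
  classical
  by_contra hpp'
  have hcp := congrArg (Multiset.count p) hp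
  have hcq := congrArg (Multiset.count p) hq
  rw [Multiset.count_cons_self, Multiset.count_cons_of_ne hpp'] at hcp
  rw [Multiset.count_cons_of_ne hpq, Multiset.count_cons] at hcq
  omega

theorem Set.eq_sdiff_singleton_of_sdiff_eq {α : Type*} {s t : Set α} {a : α} (hst : s ⊆ t)
    (ha : t \ s = {a}) : s = t \ {a} ∧ a ∈ t :=
  ⟨ha ▸ (Set.sdiff_sdiff_cancel_left hst).symm, (ha.symm ▸ rfl : a ∈ t \ s).1⟩

namespace CS

variable {E : Type u} {L : Type v} {𝒞 : CS E L} {X W Z : Set E} {c d e : E}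

theorem le.refl (e : E) : le 𝒞 X e e := fun _ _ _ he => he

theorem le.trans (hcd : le 𝒞 X c d) (hde : le 𝒞 X d e) : le 𝒞 X c e :=
  fun Y hY hYX heY => hcd Y hY hYX (hde Y hY hYX heY)

theorem le.mem (hde : le 𝒞 X d e) (hX : X ∈ 𝒞.C) (he : e ∈ X) : d ∈ X :=
  hde X hX subset_rfl he

theorem IsStable.union_mem (hS : IsStable 𝒞) {Y : Set E} (hW : W ∈ 𝒞.C) (hY : Y ∈ 𝒞.C)
    (hX : X ∈ 𝒞.C) (hWY : W ∪ Y ⊆ X) : W ∪ Y ∈ 𝒞.C :=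
  hS.2.2.1 W hW Y hY X hX hWY

theorem IsStable.inter_mem (hS : IsStable 𝒞) {Y : Set E} (hW : W ∈ 𝒞.C) (hY : Y ∈ 𝒞.C)
    (hX : X ∈ 𝒞.C) (hWY : W ∪ Y ⊆ X) : W ∩ Y ∈ 𝒞.C :=
  hS.2.2.2 W hW Y hY X hX hWY

/-- The causal past of `e` in `X` is the least subconfiguration of `X` containing `e`. -/
theorem IsStable.setOf_le_mem (hS : IsStable 𝒞) (hX : X ∈ 𝒞.C) (he : e ∈ X) :
    {d | le 𝒞 X d e} ∈ 𝒞.C := by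
  set F : Set (Set E) := {Y | Y ∈ 𝒞.C ∧ Y ⊆ X ∧ e ∈ Y}
  have hF : F.Finite := (𝒞.finite X hX).finite_subsets.subset fun Y hY => hY.2.1
  obtain ⟨Y₀, hY₀⟩ := hF.exists_minimal ⟨X, hX, subset_rfl, he⟩
  suffices {d | le 𝒞 X d e} = Y₀ from this ▸ hY₀.prop.1
  refine Set.Subset.antisymm (fun d hd => hd Y₀ hY₀.prop.1 hY₀.prop.2.1 hY₀.prop.2.2) ?_
  intro d hd Y hY hYX heY
  have hYY₀ : Y ∩ Y₀ ∈ F :=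
    ⟨hS.inter_mem hY hY₀.prop.1 hX (Set.union_subset hYX hY₀.prop.2.1),
      Set.inter_subset_left.trans hYX, heY, hY₀.prop.2.2⟩
  exact (hY₀.le_of_le hYY₀ Set.inter_subset_right hd).1

theorem IsStable.le_antisymm (hS : IsStable 𝒞) (hX : X ∈ 𝒞.C) (he : e ∈ X)
    (hde : le 𝒞 X d e) (hed : le 𝒞 X e d) : d = e := by
  set D := {x | le 𝒞 X x e}
  have hD : D ∈ 𝒞.C := hS.setOf_le_mem hX he
  have hDX : D ⊆ X := fun x hx => hx.mem hX he
  -- the only event that can be removed from the causal past of `e` is `e` itself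
  obtain ⟨x, hx, hDx⟩ := hS.2.1 D hD (Set.nonempty_of_mem (le.refl e : e ∈ D)).ne_empty
  obtain rfl : x = e := by
    by_contra hxe
    exact (hx _ hDx (Set.sdiff_subset.trans hDX) ⟨le.refl e, Ne.symm hxe⟩).2 rfl
  by_contra hdx
  exact (hed _ hDx (Set.sdiff_subset.trans hDX) ⟨hde, hdx⟩).2 rfl

theorem IsStable.lt_trans (hS : IsStable 𝒞) (hX : X ∈ 𝒞.C) (he : e ∈ X)
    (hcd : lt 𝒞 X c d) (hde : lt 𝒞 X d e) : lt 𝒞 X c e := by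
  refine ⟨hcd.1.trans hde.1, ?_⟩
  rintro rfl
  exact hde.2 (hS.le_antisymm hX he hde.1 hcd.1)

def IsLeftClosed (𝒞 : CS E L) (X Z : Set E) : Prop :=
  ∀ d ∈ Z, ∀ c, le 𝒞 X c d → c ∈ Z

theorem IsStable.mem_of_isLeftClosed (hS : IsStable 𝒞) (hX : X ∈ 𝒞.C) (hZX : Z ⊆ X)
    (hZ : IsLeftClosed 𝒞 X Z) : Z ∈ 𝒞.C := by
  have hpast : ∀ S ⊆ X, S.Finite → (⋃ d ∈ S, {c | le 𝒞 X c d}) ∈ 𝒞.C := by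
    intro S hSX hS_fin
    induction S, hS_fin using Set.Finite.induction_on with
    | empty => simpa using hS.1
    | @insert a S _ _ ih =>
      have haX : a ∈ X := hSX (Set.mem_insert a S)
      have hSX' : S ⊆ X := (Set.subset_insert a S).trans hSX
      rw [Set.biUnion_insert]
      refine hS.union_mem (hS.setOf_le_mem hX haX) (ih hSX') hX (Set.union_subset ?_ ?_)
      · exact fun c hc => hc.mem hX haX
      · exact Set.iUnion₂_subset fun d hd c hc => hc.mem hX (hSX' hd)
  convert hpast Z hZX ((𝒞.finite X hX).subset hZX)
  ext c
  simp only [Set.mem_iUnion, Set.mem_ofPred_eq]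
  exact ⟨fun hc => ⟨c, hc, le.refl c⟩, fun ⟨d, hd, hcd⟩ => hZ d hd c hcd⟩

theorem IsStable.le_iff_of_subset (hS : IsStable 𝒞) (hX : X ∈ 𝒞.C) (hW : W ∈ 𝒞.C)
    (hWX : W ⊆ X) (hd : d ∈ W) : le 𝒞 W c d ↔ le 𝒞 X c d := by
  refine ⟨fun h Y hY hYX hdY => ?_, fun h Y hY hYW hdY => h Y hY (hYW.trans hWX) hdY⟩
  have hYW : Y ∩ W ∈ 𝒞.C := hS.inter_mem hY hW hX (Set.union_subset hYX hWX)
  exact (h _ hYW Set.inter_subset_right ⟨hdY, hd⟩).1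

theorem IsStable.lt_iff_of_subset (hS : IsStable 𝒞) (hX : X ∈ 𝒞.C) (hW : W ∈ 𝒞.C)
    (hWX : W ⊆ X) (hd : d ∈ W) : lt 𝒞 W c d ↔ lt 𝒞 X c d :=
  and_congr_left' (hS.le_iff_of_subset hX hW hWX hd)

def chainLengths (𝒞 : CS E L) (X : Set E) (e : E) : Set ℕ :=
  {n | ∃ l : List E, l.length = n ∧ l.IsChain (lt 𝒞 X) ∧ (∀ x ∈ l, x ∈ X) ∧
    l.getLast? = some e}

theorem depth_eq_sSup_chainLengths (𝒞 : CS E L) (X : Set E) (e : E) :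
    depth 𝒞 X e = sSup (chainLengths 𝒞 X e) := rfl

theorem le_of_mem_of_isChain {l : List E} (hl : l.IsChain (lt 𝒞 X)) (he : l.getLast? = some e)
    (hc : c ∈ l) : le 𝒞 X c e := by
  have : Trans (le 𝒞 X) (le 𝒞 X) (le 𝒞 X) := ⟨le.trans⟩
  obtain ⟨l, rfl⟩ := List.getLast?_eq_some_iff.mp he
  have hpw := List.isChain_iff_pairwise.mp (hl.imp fun _ _ h => h.1)
  rcases List.mem_append.mp hc with hc | hc
  · exact (List.pairwise_append.mp hpw).2.2 c hc e (List.mem_singleton_self e)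
  · exact List.mem_singleton.mp hc ▸ le.refl c

theorem length_le_ncard_of_isChain (hS : IsStable 𝒞) (hX : X ∈ 𝒞.C) {l : List E}
    (hl : l.IsChain (lt 𝒞 X)) (hlX : ∀ x ∈ l, x ∈ X) : l.length ≤ X.ncard := by
  classical
  let S : E → E → Prop := fun x y => lt 𝒞 X x y ∧ y ∈ X
  have : Trans S S S := ⟨fun hxy hyz => ⟨hS.lt_trans hX hyz.2 hxy.1 hyz.1, hyz.2⟩⟩
  have hnd : l.Nodup :=
    (List.isChain_iff_pairwise (R := S).mp
      (hl.imp_of_mem_imp fun _ b _ hb h => ⟨h, hlX b hb⟩)).imp fun h => h.1.2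
  calc l.length = (l.toFinset : Set E).ncard := by
        rw [Set.ncard_coe_finset, List.toFinset_card_of_nodup hnd]
    _ ≤ X.ncard := Set.ncard_le_ncard (fun x hx => hlX x (by simpa using hx)) (𝒞.finite X hX)

theorem depth_mem_chainLengths (hS : IsStable 𝒞) (hX : X ∈ 𝒞.C) (he : e ∈ X) :
    depth 𝒞 X e ∈ chainLengths 𝒞 X e :=
  Nat.sSup_mem ⟨1, [e], rfl, List.isChain_singleton e, by simpa using he, rfl⟩
    ⟨X.ncard, fun _ ⟨_, hl, hch, hlX, _⟩ => hl ▸ length_le_ncard_of_isChain hS hX hch hlX⟩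

theorem le_depth (hS : IsStable 𝒞) (hX : X ∈ 𝒞.C) {n : ℕ} (hn : n ∈ chainLengths 𝒞 X e) :
    n ≤ depth 𝒞 X e :=
  le_csSup ⟨X.ncard, fun _ ⟨_, hl, hch, hlX, _⟩ => hl ▸ length_le_ncard_of_isChain hS hX hch hlX⟩
    hn

theorem one_le_depth (hS : IsStable 𝒞) (hX : X ∈ 𝒞.C) (he : e ∈ X) : 1 ≤ depth 𝒞 X e :=
  le_depth hS hX ⟨[e], rfl, List.isChain_singleton e, by simpa using he, rfl⟩

theorem depth_lt_depth (hS : IsStable 𝒞) (hX : X ∈ 𝒞.C) (hc : c ∈ X) (hd : d ∈ X)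
    (hcd : lt 𝒞 X c d) : depth 𝒞 X c < depth 𝒞 X d := by
  obtain ⟨l, hlen, hch, hlX, hlast⟩ := depth_mem_chainLengths hS hX hc
  have hext : l.length + 1 ∈ chainLengths 𝒞 X d := by
    refine ⟨l ++ [d], by simp, hch.append (List.isChain_singleton d) ?_, ?_, by simp⟩
    · simpa [hlast] using hcd
    · simpa [or_imp, forall_and] using ⟨hlX, hd⟩
  have := le_depth hS hX hext
  omega

/-- The second-to-last event of a longest chain ending in `e` has depth one less. -/
theorem exists_lt_depth_eq_sub_one (hS : IsStable 𝒞) (hX : X ∈ 𝒞.C) (he : e ∈ X)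
    (h2 : 2 ≤ depth 𝒞 X e) :
    ∃ c ∈ X, lt 𝒞 X c e ∧ depth 𝒞 X c = depth 𝒞 X e - 1 := by
  obtain ⟨l, hlen, hch, hlX, hlast⟩ := depth_mem_chainLengths hS hX he
  obtain ⟨l, rfl⟩ := List.getLast?_eq_some_iff.mp hlast
  obtain ⟨l, c, rfl⟩ := (List.eq_nil_or_concat' l).resolve_left (by rintro rfl; simp at hlen; omega)
  have hcX : c ∈ X := hlX c (by simp)
  have hce : lt 𝒞 X c e := by simpa using (List.isChain_append.mp hch).2.2
  have hc : l.length + 1 ∈ chainLengths 𝒞 X c :=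
    ⟨l ++ [c], by simp, hch.left_of_append, fun x hx => hlX x (List.mem_append_left _ hx), by simp⟩
  have h1 := le_depth hS hX hc
  have h2 := depth_lt_depth hS hX hcX he hce
  simp only [List.length_append, List.length_singleton] at hlen
  exact ⟨c, hcX, hce, by omega⟩

/-- Every chain ending in `W` lies inside `W`. -/
theorem depth_eq_of_isLeftClosed (hS : IsStable 𝒞) (hX : X ∈ 𝒞.C) (hW : W ∈ 𝒞.C)
    (hWX : W ⊆ X) (hWc : IsLeftClosed 𝒞 X W) (he : e ∈ W) : depth 𝒞 W e = depth 𝒞 X e := by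
  rw [depth_eq_sSup_chainLengths, depth_eq_sSup_chainLengths]
  congr 1
  ext n
  refine ⟨fun ⟨l, hlen, hch, hlW, hlast⟩ => ⟨l, hlen, ?_, fun x hx => hWX (hlW x hx), hlast⟩,
    fun ⟨l, hlen, hch, hlX, hlast⟩ => ?_⟩
  · exact hch.imp_of_mem_imp fun _ b _ hb h => (hS.lt_iff_of_subset hX hW hWX (hlW b hb)).mp h
  · have hlW : ∀ x ∈ l, x ∈ W := fun x hx => hWc e he x (le_of_mem_of_isChain hch hlast hx)
    refine ⟨l, hlen, ?_, hlW, hlast⟩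
    exact hch.imp_of_mem_imp fun _ b _ hb h => (hS.lt_iff_of_subset hX hW hWX (hlW b hb)).mpr h

def IsMaxEvent (𝒞 : CS E L) (X : Set E) (e : E) : Prop :=
  e ∈ X ∧ ∀ d ∈ X, ¬ lt 𝒞 X e d

theorem isMaxEvent_of_diff_mem (he : e ∈ X) (hXe : X \ {e} ∈ 𝒞.C) : IsMaxEvent 𝒞 X e :=
  ⟨he, fun _ hd hed => (hed.1 _ hXe Set.sdiff_subset ⟨hd, hed.2.symm⟩).2 rfl⟩

theorem IsMaxEvent.co (hd : IsMaxEvent 𝒞 X d) (he : IsMaxEvent 𝒞 X e) : co 𝒞 X d e :=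
  ⟨hd.2 e he.1, he.2 d hd.1⟩

theorem IsMaxEvent.isLeftClosed_diff (he : IsMaxEvent 𝒞 X e) (hX : X ∈ 𝒞.C) :
    IsLeftClosed 𝒞 X (X \ {e}) := by
  rintro d ⟨hdX, hde⟩ c hcd
  refine ⟨hcd.mem hX hdX, ?_⟩
  rintro rfl
  exact he.2 d hdX ⟨hcd, Ne.symm hde⟩

theorem IsMaxEvent.diff_mem (he : IsMaxEvent 𝒞 X e) (hS : IsStable 𝒞) (hX : X ∈ 𝒞.C) :
    X \ {e} ∈ 𝒞.C :=
  hS.mem_of_isLeftClosed hX Set.sdiff_subset (he.isLeftClosed_diff hX)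

theorem IsMaxEvent.depth_diff (he : IsMaxEvent 𝒞 X e) (hS : IsStable 𝒞) (hX : X ∈ 𝒞.C)
    (hd : d ∈ X \ {e}) : depth 𝒞 (X \ {e}) d = depth 𝒞 X d :=
  depth_eq_of_isLeftClosed hS hX (he.diff_mem hS hX) Set.sdiff_subset
    (he.isLeftClosed_diff hX) hd

/-- An event of maximal depth among those above `c` is a maximal event. -/
theorem exists_isMaxEvent_le (hS : IsStable 𝒞) (hX : X ∈ 𝒞.C) (hx : c ∈ X) :
    ∃ e, IsMaxEvent 𝒞 X e ∧ le 𝒞 X c e := by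
  obtain ⟨e, ⟨heX, hce⟩, hmax⟩ := Set.Finite.exists_maximalFor (depth 𝒞 X)
    {e | e ∈ X ∧ le 𝒞 X c e} ((𝒞.finite X hX).subset fun _ h => h.1) ⟨c, hx, le.refl c⟩
  refine ⟨e, ⟨heX, fun d hd hed => ?_⟩, hce⟩
  have hlt := depth_lt_depth hS hX heX hd hed
  exact hlt.not_ge (hmax ⟨hd, hce.trans hed.1⟩ hlt.le)

theorem lt_of_forall_isMaxEvent_eq (hS : IsStable 𝒞) (hX : X ∈ 𝒞.C)
    (huniq : ∀ d, IsMaxEvent 𝒞 X d → d = e) : ∀ c ∈ X \ {e}, lt 𝒞 X c e := by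
  intro c hc
  obtain ⟨d, hd, hcd⟩ := exists_isMaxEvent_le hS hX hc.1
  exact ⟨huniq d hd ▸ hcd, hc.2⟩

noncomputable def labelDepthMS (𝒞 : CS E L) (X : Set E) : Multiset (L × ℕ) := by
  classical exact if h : X.Finite then
    h.toFinset.val.map fun e => (𝒞.label e, depth 𝒞 X e) else 0

theorem labelDepthMS_eq_map (hX : X.Finite) :
    labelDepthMS 𝒞 X = hX.toFinset.val.map fun e => (𝒞.label e, depth 𝒞 X e) := by
  simp [labelDepthMS, hX]

@[simp]
theorem labelDepthMS_empty : labelDepthMS 𝒞 ∅ = 0 := by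
  simp [labelDepthMS]

theorem mem_labelDepthMS (hX : X.Finite) {p : L × ℕ} :
    p ∈ labelDepthMS 𝒞 X ↔ ∃ x ∈ X, (𝒞.label x, depth 𝒞 X x) = p := by
  simp [labelDepthMS_eq_map hX]

theorem IsMaxEvent.labelDepthMS_eq_cons (he : IsMaxEvent 𝒞 X e) (hS : IsStable 𝒞)
    (hX : X ∈ 𝒞.C) :
    labelDepthMS 𝒞 X = (𝒞.label e, depth 𝒞 X e) ::ₘ labelDepthMS 𝒞 (X \ {e}) := by
  classical
  have hfin := 𝒞.finite X hX
  have hfin' : (X \ {e}).Finite := hfin.subset Set.sdiff_subset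
  have hval : hfin.toFinset.val = e ::ₘ hfin'.toFinset.val := by
    have : hfin'.toFinset = hfin.toFinset.erase e := by ext; simp [and_comm]
    rw [this, Finset.erase_val, Multiset.cons_erase (by simpa using he.1)]
  rw [labelDepthMS_eq_map hfin, labelDepthMS_eq_map hfin', hval, Multiset.map_cons]
  congr 1
  refine Multiset.map_congr rfl fun x hx => ?_
  rw [he.depth_diff hS hX (by simpa using hx)]

/-- The supremum of the empty multiset is `0`, which covers `X = {e}`. -/
theorem depth_eq_sup_add_one (hS : IsStable 𝒞) (hX : X ∈ 𝒞.C) (he : IsMaxEvent 𝒞 X e)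
    (htop : ∀ c ∈ X \ {e}, lt 𝒞 X c e) :
    depth 𝒞 X e = ((labelDepthMS 𝒞 (X \ {e})).map Prod.snd).sup + 1 := by
  have hfin' : (X \ {e}).Finite := (𝒞.finite X hX).subset Set.sdiff_subset
  have hmem : ∀ c ∈ X \ {e}, depth 𝒞 X c ∈ (labelDepthMS 𝒞 (X \ {e})).map Prod.snd :=
    fun c hc => Multiset.mem_map.mpr
      ⟨_, (mem_labelDepthMS hfin').mpr ⟨c, hc, rfl⟩, he.depth_diff hS hX hc⟩
  apply le_antisymm
  · by_cases h2 : 2 ≤ depth 𝒞 X e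
    · obtain ⟨c, hcX, hce, hc⟩ := exists_lt_depth_eq_sub_one hS hX he.1 h2
      have := Multiset.le_sup (hmem c ⟨hcX, hce.2⟩)
      omega
    · omega
  · have hsup : ((labelDepthMS 𝒞 (X \ {e})).map Prod.snd).sup ≤ depth 𝒞 X e - 1 := by
      refine Multiset.sup_le.mpr fun n hn => ?_
      obtain ⟨_, hp, rfl⟩ := Multiset.mem_map.mp hn
      obtain ⟨c, hc, rfl⟩ := (mem_labelDepthMS hfin').mp hp
      have := depth_lt_depth hS hX hc.1 he.1 (htop c hc)
      rw [he.depth_diff hS hX hc]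
      omega
    have := one_le_depth hS hX he.1
    omega

section Matching

variable {E₁ E₂ : Type u} {𝒞 : CS E₁ L} {𝒟 : CS E₂ L} {X : Set E₁} {Y : Set E₂}

def MaxEventsMatch (𝒞 : CS E₁ L) (𝒟 : CS E₂ L) (X : Set E₁) (Y : Set E₂) : Prop :=
  ∀ e, IsMaxEvent 𝒞 X e → ∃ f, IsMaxEvent 𝒟 Y f ∧ 𝒟.label f = 𝒞.label e ∧
    labelDepthMS 𝒞 (X \ {e}) = labelDepthMS 𝒟 (Y \ {f})

theorem MaxEventsMatch.isMaxEvent_unique (h𝒞 : IsStable 𝒞) (h𝒟 : IsStable 𝒟)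
    (hac𝒞 : NoEqAC 𝒞) (hX : X ∈ 𝒞.C) (hY : Y ∈ 𝒟.C) (hXY : MaxEventsMatch 𝒞 𝒟 X Y)
    (hne : labelDepthMS 𝒞 X ≠ labelDepthMS 𝒟 Y) {e₁ e₂ : E₁}
    (he₁ : IsMaxEvent 𝒞 X e₁) (he₂ : IsMaxEvent 𝒞 X e₂) : e₁ = e₂ := by
  obtain ⟨f₁, hf₁, hlab₁, hT₁⟩ := hXY e₁ he₁
  obtain ⟨f₂, hf₂, hlab₂, hT₂⟩ := hXY e₂ he₂
  have hp : (𝒞.label e₁, depth 𝒞 X e₁) = (𝒞.label e₂, depth 𝒞 X e₂) := by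
    refine Multiset.eq_of_cons_eq_cons_of_ne (s := labelDepthMS 𝒞 (X \ {e₁}))
      (t := labelDepthMS 𝒞 (X \ {e₂}))
      (q := (𝒞.label e₁, depth 𝒟 Y f₁)) (q' := (𝒞.label e₂, depth 𝒟 Y f₂)) ?_ ?_ ?_
    · rw [← he₁.labelDepthMS_eq_cons h𝒞 hX, ← he₂.labelDepthMS_eq_cons h𝒞 hX]
    · rw [hT₁, hT₂, ← hlab₁, ← hlab₂, ← hf₁.labelDepthMS_eq_cons h𝒟 hY,
        ← hf₂.labelDepthMS_eq_cons h𝒟 hY]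
    · intro hdepth
      apply hne
      rw [he₁.labelDepthMS_eq_cons h𝒞 hX, hf₁.labelDepthMS_eq_cons h𝒟 hY, hT₁, hlab₁, hdepth]
  obtain ⟨hlab, hdepth⟩ := Prod.ext_iff.mp hp
  exact hac𝒞 X hX e₁ he₁.1 e₂ he₂.1 (he₁.co he₂) hlab hdepth

theorem labelDepthMS_eq_of_maxEventsMatch (h𝒞 : IsStable 𝒞) (h𝒟 : IsStable 𝒟)
    (hac𝒞 : NoEqAC 𝒞) (hac𝒟 : NoEqAC 𝒟) (hX : X ∈ 𝒞.C) (hY : Y ∈ 𝒟.C)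
    (hXY : MaxEventsMatch 𝒞 𝒟 X Y) (hYX : MaxEventsMatch 𝒟 𝒞 Y X) :
    labelDepthMS 𝒞 X = labelDepthMS 𝒟 Y := by
  by_contra hne
  rcases X.eq_empty_or_nonempty with rfl | ⟨x, hx⟩
  · obtain rfl : Y = ∅ := by
      refine Set.eq_empty_of_forall_notMem fun y hy => ?_
      obtain ⟨f, hf, -⟩ := exists_isMaxEvent_le h𝒟 hY hy
      obtain ⟨e, he, -⟩ := hYX f hf
      exact he.1
    simp at hne
  obtain ⟨e, he, -⟩ := exists_isMaxEvent_le h𝒞 hX hx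
  obtain ⟨f, hf, hlab, hT⟩ := hXY e he
  have htopX := lt_of_forall_isMaxEvent_eq h𝒞 hX
    fun d hd => hXY.isMaxEvent_unique h𝒞 h𝒟 hac𝒞 hX hY hne hd he
  have htopY := lt_of_forall_isMaxEvent_eq h𝒟 hY
    fun d hd => hYX.isMaxEvent_unique h𝒟 h𝒞 hac𝒟 hY hX (Ne.symm hne) hd hf
  have hdepth : depth 𝒞 X e = depth 𝒟 Y f := by
    rw [depth_eq_sup_add_one h𝒞 hX he htopX, depth_eq_sup_add_one h𝒟 hY hf htopY, hT]
  apply hne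
  rw [he.labelDepthMS_eq_cons h𝒞 hX, hf.labelDepthMS_eq_cons h𝒟 hY, hT, hlab, hdepth]

end Matching

section Bisimulation

variable {E₁ E₂ : Type u} {𝒞 : CS E₁ L} {𝒟 : CS E₂ L} {R : Set E₁ → Set E₂ → Prop}

theorem IsRB.symm (hR : IsRB 𝒞 𝒟 R) : IsRB 𝒟 𝒞 (flip R) :=
  ⟨⟨⟨hR.1.1.1, fun Y X h => (hR.1.1.2 X Y h).symm⟩,
      fun Y X h => ⟨(hR.1.2 X Y h).2, (hR.1.2 X Y h).1⟩⟩,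
    fun Y X h => ⟨(hR.2 X Y h).2, (hR.2 X Y h).1⟩⟩

theorem IsRB.exists_isMaxEvent_diff (hR : IsRB 𝒞 𝒟 R) (h𝒞 : IsStable 𝒞) {X : Set E₁}
    {Y : Set E₂} (hXY : R X Y) {e : E₁} (he : IsMaxEvent 𝒞 X e) :
    ∃ f, IsMaxEvent 𝒟 Y f ∧ 𝒟.label f = 𝒞.label e ∧ R (X \ {e}) (Y \ {f}) := by
  have hX := (hR.1.1.2 X Y hXY).1
  have hundo : RTrans 𝒞 (𝒞.label e) X (X \ {e}) :=
    ⟨he.diff_mem h𝒞 hX, hX, Set.sdiff_subset, e,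
      Set.sdiff_sdiff_cancel_left (Set.singleton_subset_iff.mpr he.1), rfl⟩
  obtain ⟨Y₁, ⟨hY₁, -, hY₁Y, f, hf, hlab⟩, hR₁⟩ := (hR.2 X Y hXY).1 _ _ hundo
  obtain ⟨rfl, hfY⟩ := Set.eq_sdiff_singleton_of_sdiff_eq hY₁Y hf
  exact ⟨f, isMaxEvent_of_diff_mem hfY hY₁, hlab, hR₁⟩

theorem IsRB.labelDepthMS_eq (hR : IsRB 𝒞 𝒟 R) (h𝒞 : IsStable 𝒞) (h𝒟 : IsStable 𝒟)
    (hac𝒞 : NoEqAC 𝒞) (hac𝒟 : NoEqAC 𝒟) {X : Set E₁} {Y : Set E₂} (hXY : R X Y) :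
    labelDepthMS 𝒞 X = labelDepthMS 𝒟 Y := by
  induction hn : X.ncard using Nat.strong_induction_on generalizing X Y with
  | _ n ih =>
    obtain ⟨hX, hY⟩ := hR.1.1.2 X Y hXY
    have hlt : ∀ e ∈ X, (X \ {e}).ncard < n := fun e he =>
      hn ▸ Set.ncard_sdiff_singleton_lt_of_mem he (𝒞.finite X hX)
    refine labelDepthMS_eq_of_maxEventsMatch h𝒞 h𝒟 hac𝒞 hac𝒟 hX hY (fun e he => ?_) fun f hf => ?_
    · obtain ⟨f, hf, hlab, hR₁⟩ := hR.exists_isMaxEvent_diff h𝒞 hXY he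
      exact ⟨f, hf, hlab, ih _ (hlt e he.1) hR₁ rfl⟩
    · obtain ⟨e, he, hlab, hR₁⟩ := hR.symm.exists_isMaxEvent_diff h𝒟 hXY hf
      exact ⟨e, he, hlab, (ih _ (hlt e he.1) hR₁ rfl).symm⟩

theorem FTransD.labelDepthMS_eq_cons {a : L} {k : ℕ} {X X' : Set E₁} (h𝒞 : IsStable 𝒞)
    (h : FTransD 𝒞 a k X X') : labelDepthMS 𝒞 X' = (a, k) ::ₘ labelDepthMS 𝒞 X := by
  obtain ⟨hX, hX', hXX', e, he, rfl, rfl⟩ := h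
  obtain ⟨rfl, heX'⟩ := Set.eq_sdiff_singleton_of_sdiff_eq hXX' he
  exact (isMaxEvent_of_diff_mem heX' hX).labelDepthMS_eq_cons h𝒞 hX'

end Bisimulation

end CS

/-- without equidepth auto-concurrency, a reverse bisimulation
matches single-event transitions on depth. -/
theorem stmt17 {E₁ E₂ : Type u} {L : Type v} (𝒞 : CS E₁ L) (𝒟 : CS E₂ L)
    (h𝒞 : IsStable 𝒞) (h𝒟 : IsStable 𝒟)
    (hac𝒞 : NoEqAC 𝒞) (hac𝒟 : NoEqAC 𝒟)
    (R : Set E₁ → Set E₂ → Prop) (hR : IsRB 𝒞 𝒟 R)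
    (X X' : Set E₁) (Y Y' : Set E₂) (a : L) (k k' : ℕ)
    (hX : FTransD 𝒞 a k X X') (hY : FTransD 𝒟 a k' Y Y')
    (h1 : R X Y) (h2 : R X' Y') :
    k = k' := by
  have h := hR.labelDepthMS_eq h𝒞 h𝒟 hac𝒞 hac𝒟 h2
  rw [hX.labelDepthMS_eq_cons h𝒞, hY.labelDepthMS_eq_cons h𝒟,
    hR.labelDepthMS_eq h𝒞 h𝒟 hac𝒞 hac𝒟 h1, Multiset.cons_inj_left] at h
  exact (Prod.ext_iff.mp h).2
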